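/- Every 3-connected cubic planar graph of circumference at least 4 contains a cycle whose length ℓ satisfies 4 ≤ ℓ ≤ 10, i.e., Merker's conjecture holds for k = 4. -/

import Mathlib

open SimpleGraph

/-- The cycle spectrum of a graph: the set of lengths of its cycles. -/
def CycleLengths {V : Type*} (G : SimpleGraph V) : Set ℕ :=
  {n | ∃ (v : V) (w : G.Walk v v), w.IsCycle ∧ w.length = n}

/-- `G` has circumference at least `k`: some cycle has length at least `k`. -/
def CircumferenceAtLeast {V : Type*} (G : SimpleGraph V) (k : ℕ) : Prop :=
  ∃ n ∈ CycleLengths G, k ≤ n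

/-- A graph is cubic if every vertex has exactly three neighbours. -/
def IsCubic {V : Type*} (G : SimpleGraph V) : Prop :=
  ∀ v : V, (G.neighborSet v).ncard = 3

/-- A graph is 3-connected if it has more than 3 vertices and deleting any set of
fewer than 3 vertices leaves it connected. -/
def IsThreeConnected {V : Type*} (G : SimpleGraph V) : Prop :=
  3 < (Set.univ : Set V).ncard ∧
    ∀ s : Set V, s.Finite → s.ncard < 3 → (G.induce (sᶜ : Set V)).Connected

/-- Reversal of darts, as a permutation. -/
def dartReversal {V : Type*} (G : SimpleGraph V) : Equiv.Perm G.Dart :=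
  Function.Involutive.toPerm SimpleGraph.Dart.symm Dart.symm_involutive

/-- A combinatorial embedding of `G` on an orientable surface, given by a rotation
system: a permutation of the darts preserving tails, acting transitively on the
darts at each vertex. -/
structure PlaneEmbedding {V : Type*} (G : SimpleGraph V) where
  rot : Equiv.Perm G.Dart
  rot_tail : ∀ d : G.Dart, (rot d).toProd.1 = d.toProd.1
  rot_orbit : ∀ d e : G.Dart, d.toProd.1 = e.toProd.1 → ∃ n : ℕ, (rot ^ n) d = e

namespace PlaneEmbedding

variable {V : Type*} {G : SimpleGraph V}

/-- The face permutation of a combinatorial embedding. -/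
def facePerm (E : PlaneEmbedding G) : Equiv.Perm G.Dart :=
  (dartReversal G).trans E.rot

/-- The face (orbit of the face permutation) containing a given dart. -/
def faceOf (E : PlaneEmbedding G) (d : G.Dart) : Set G.Dart :=
  {e | ∃ n : ℤ, (E.facePerm ^ n) d = e}

/-- The set of faces of a combinatorial embedding. -/
def faces (E : PlaneEmbedding G) : Set (Set G.Dart) :=
  {s | ∃ d : G.Dart, s = E.faceOf d}

/-- A combinatorial embedding is spherical (planar) when Euler's formula
`|V| + |F| = |E| + 2` holds. -/
def IsSpherical (E : PlaneEmbedding G) : Prop :=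
  (Set.univ : Set V).ncard + E.faces.ncard = G.edgeSet.ncard + 2

end PlaneEmbedding

/-- A graph is planar if it is connected and admits a spherical combinatorial
embedding (Heffter–Edmonds). -/
def IsPlanar {V : Type*} (G : SimpleGraph V) : Prop :=
  G.Connected ∧ ∃ E : PlaneEmbedding G, E.IsSpherical

/-!
Suppose a cubic plane graph `G` has no cycle of length between 4 and 10. Call a dart an
*opposite-triangle dart* when its reversal bounds a triangular face. Without 4-cycles no edge lies
on two triangles, and the rotation at each vertex is a 3-cycle; together these show that
opposite-triangle darts never follow each other along a face and that triangular faces carry none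
of them. For a cubic graph Euler's formula reads `∑_F (|F| - 6) = -12`. The opposite-triangle darts
are the reversals of the darts of triangular faces, three per triangle, so moving them to the faces
that contain them turns the sum into `∑_{F non-triangular} (|F| - 6 - j_F) = -12`, where `j_F`
counts the opposite-triangle darts of `F`. Hence some non-triangular face has `|F| ≤ 5 + j_F`,
and as `2 j_F ≤ |F|`, `|F| ≤ 10`.

The boundary walk of that face never turns straight back, so its shortest closed subwalk is a
cycle, of length between 3 and `|F|`. Length 3 remains: the walk then runs `w → x → y → z → x`,
the rotation at `x` forces it to continue back to `w`, and none of these five darts is an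
opposite-triangle dart. The counting above then forces `|F| ≤ 6`, which leaves no room for the
walk to leave `w` and return.
-/

open Finset

open scoped Classical

namespace SimpleGraph

variable {V : Type*} {G : SimpleGraph V}

def walkOfSeq (t : ℕ → V) (ht : ∀ i, G.Adj (t i) (t (i + 1))) : (n : ℕ) → G.Walk (t 0) (t n)
  | 0 => Walk.nil
  | n + 1 => (walkOfSeq t ht n).concat (ht n)

theorem length_walkOfSeq (t : ℕ → V) (ht : ∀ i, G.Adj (t i) (t (i + 1))) (n : ℕ) :
    (walkOfSeq t ht n).length = n := by
  induction n with
  | zero => rfl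
  | succ n ih => simp [walkOfSeq, ih]

theorem support_walkOfSeq (t : ℕ → V) (ht : ∀ i, G.Adj (t i) (t (i + 1))) (n : ℕ) :
    (walkOfSeq t ht n).support = (List.range (n + 1)).map t := by
  induction n with
  | zero => rfl
  | succ n ih => simp [walkOfSeq, ih, List.range_succ]

theorem three_le_of_mem_cycleLengths {n : ℕ} (h : n ∈ CycleLengths G) : 3 ≤ n := by
  obtain ⟨_, w, hw, rfl⟩ := h
  exact hw.three_le_length

theorem mem_cycleLengths_of_seq {t : ℕ → V} (ht : ∀ i, G.Adj (t i) (t (i + 1))) {n : ℕ}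
    (hn : 3 ≤ n) (hclosed : t n = t 0) (hinj : Set.InjOn t (Set.Ioc 0 n)) :
    n ∈ CycleLengths G := by
  refine ⟨t 0, (walkOfSeq t ht n).copy rfl hclosed, ?_, by simp [length_walkOfSeq]⟩
  have hlen : ((walkOfSeq t ht n).copy rfl hclosed).length = n := by simp [length_walkOfSeq]
  rw [Walk.isCycle_iff_isPath_tail_and_le_length, Walk.isPath_def,
    Walk.support_tail_of_not_nil _ (Walk.not_nil_iff_lt_length.2 (by omega)), hlen]
  refine ⟨?_, hn⟩
  simp only [Walk.support_copy, support_walkOfSeq, List.range_succ_eq_map, List.map_cons,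
    List.tail_cons, List.map_map]
  exact List.nodup_range.map_on fun i hi j hj hij =>
    Nat.succ_injective (hinj (by simp at hi; simp; omega) (by simp at hj; simp; omega) hij)

theorem four_mem_cycleLengths {a b c d : V} (hab : G.Adj a b) (hbc : G.Adj b c)
    (hcd : G.Adj c d) (hda : G.Adj d a) (hac : a ≠ c) (hbd : b ≠ d) : 4 ∈ CycleLengths G := by
  refine ⟨a, .cons hab (.cons hbc (.cons hcd (.cons hda .nil))), ?_, rfl⟩
  rw [Walk.cons_isCycle_iff]
  simp [Walk.isPath_def, hab.ne, hbc.ne, hcd.ne, hda.ne, hab.ne.symm, hda.ne.symm, hac, hbd,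
    hac.symm]

theorem eq_of_adj_of_adj_of_four_notMem (h4 : 4 ∉ CycleLengths G) {x y z w : V}
    (hyz : G.Adj y z) (hxy : G.Adj x y) (hxz : G.Adj x z) (hwy : G.Adj w y) (hwz : G.Adj w z) :
    x = w := by
  by_contra hxw
  exact h4 (four_mem_cycleLengths hxy hwy.symm hwz hxz.symm hxw hyz.ne)

theorem exists_cycle_of_closed_seq {t : ℕ → V} (hadj : ∀ i, G.Adj (t i) (t (i + 1)))
    (hback : ∀ i, t i ≠ t (i + 2)) {s : ℕ} (hs : 0 < s) (hclosed : t s = t 0) :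
    ∃ k ∈ CycleLengths G, k ≤ s ∧ ∃ i, t (i + k) = t i := by
  have hex : ∃ k, 0 < k ∧ ∃ i, t (i + k) = t i := ⟨s, hs, 0, by simpa using hclosed⟩
  set k := Nat.find hex
  obtain ⟨hk0, i, hi⟩ : 0 < k ∧ ∃ i, t (i + k) = t i := Nat.find_spec hex
  have hk1 : k ≠ 1 := fun h => (hadj i).ne (by rw [← h, hi])
  have hk2 : k ≠ 2 := fun h => hback i (by rw [← h, hi])
  have hsep : ∀ p q, 0 < p → p < q → q ≤ k → t (i + p) ≠ t (i + q) := fun p q hp hpq hq h =>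
    Nat.find_min hex (m := q - p) (by omega)
      ⟨by omega, i + p, by rw [show i + p + (q - p) = i + q by omega, h]⟩
  refine ⟨k, mem_cycleLengths_of_seq (t := fun n => t (i + n)) (fun n => hadj (i + n))
    (by omega) (by simpa using hi) ?_, Nat.find_le ⟨hs, 0, by simpa using hclosed⟩, i, hi⟩
  intro p hp q hq hpq
  simp only [Set.mem_Ioc] at hp hq
  by_contra hne
  rcases Nat.lt_or_gt_of_ne hne with h | h
  exacts [hsep p q hp.1 h hq.2 hpq, hsep q p hq.1 h hp.2 hpq.symm]

end SimpleGraph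

namespace Equiv.Perm

variable {α : Type*}

theorem isCycleOn_sameCycle (f : Perm α) (x : α) : f.IsCycleOn {y | f.SameCycle x y} :=
  ⟨f.bijOn fun _ => sameCycle_apply_right, fun _ hy _ hz => (hy : f.SameCycle x _).symm.trans hz⟩

theorem two_mul_card_filter_add_card_le [DecidableEq α] (f : Perm α) {F N : Finset α}
    (hF : ∀ x ∈ F, f x ∈ F) {p : α → Prop} [DecidablePred p] (hp : ∀ x, p x → ¬ p (f x))
    (hN : N ⊆ F) (hNp : ∀ x ∈ N, ¬ p x ∧ ¬ p (f x)) : 2 * #(F.filter p) + #N ≤ #F := by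
  set A := F.filter p
  have hAB : _root_.Disjoint A (A.image f) := by
    simp only [Finset.disjoint_left, mem_image, mem_filter, A]
    rintro _ ⟨-, hx⟩ ⟨y, ⟨-, hy⟩, rfl⟩
    exact hp y hy hx
  have hAC : _root_.Disjoint A (N.image f) := by
    simp only [Finset.disjoint_left, mem_image, mem_filter, A]
    rintro _ ⟨-, hx⟩ ⟨y, hy, rfl⟩
    exact (hNp y hy).2 hx
  have hBC : _root_.Disjoint (A.image f) (N.image f) := by
    rw [disjoint_image f.injective, Finset.disjoint_left]
    exact fun x hx hxN => (hNp x hxN).1 (mem_filter.1 hx).2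
  have hsub : A ∪ A.image f ∪ N.image f ⊆ F := by
    refine union_subset (union_subset (filter_subset _ _) ?_) ?_ <;>
      simp only [image_subset_iff]
    exacts [fun x hx => hF x (mem_filter.1 hx).1, fun x hx => hF x (hN hx)]
  have := card_le_card hsub
  rw [card_union_of_disjoint (disjoint_union_left.2 ⟨hAC, hBC⟩), card_union_of_disjoint hAB,
    card_image_of_injective _ f.injective, card_image_of_injective _ f.injective] at this
  omega

end Equiv.Perm

theorem IsCubic.degree_eq {V : Type*} [Fintype V] {G : SimpleGraph V} (hc : IsCubic G) (v : V) :
    G.degree v = 3 := by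
  rw [← card_neighborSet_eq_degree, ← Nat.card_eq_fintype_card, Nat.card_coe_set_eq]
  exact hc v

theorem IsCubic.card_filter_fst_eq {V : Type*} [Fintype V] {G : SimpleGraph V} (hc : IsCubic G)
    (v : V) : #({d : G.Dart | d.fst = v} : Finset G.Dart) = 3 := by
  rw [← hc.degree_eq v, ← G.dart_fst_fiber_card_eq_degree v]

namespace PlaneEmbedding

variable {V : Type*} {G : SimpleGraph V} (E : PlaneEmbedding G)

theorem facePerm_apply (d : G.Dart) : E.facePerm d = E.rot d.symm := rfl

theorem fst_facePerm (d : G.Dart) : (E.facePerm d).fst = d.snd := E.rot_tail d.symm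

theorem facePerm_pow_succ (d : G.Dart) (n : ℕ) :
    (E.facePerm ^ (n + 1)) d = E.facePerm ((E.facePerm ^ n) d) := by
  rw [pow_succ', Equiv.Perm.mul_apply]

def faceVert (d : G.Dart) (n : ℕ) : V := ((E.facePerm ^ n) d).fst

theorem snd_facePerm_pow (d : G.Dart) (n : ℕ) :
    ((E.facePerm ^ n) d).snd = E.faceVert d (n + 1) := by
  rw [faceVert, facePerm_pow_succ, fst_facePerm]

theorem adj_faceVert (d : G.Dart) (n : ℕ) : G.Adj (E.faceVert d n) (E.faceVert d (n + 1)) := by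
  rw [← snd_facePerm_pow]
  exact ((E.facePerm ^ n) d).adj

theorem faceVert_facePerm_pow (d : G.Dart) (m n : ℕ) :
    E.faceVert ((E.facePerm ^ m) d) n = E.faceVert d (n + m) := by
  rw [faceVert, faceVert, pow_add, Equiv.Perm.mul_apply]

variable [Fintype V]

theorem isCycleOn_rot (v : V) : E.rot.IsCycleOn ({d : G.Dart | d.fst = v} : Finset G.Dart) := by
  refine ⟨E.rot.bijOn fun d => by simp [E.rot_tail], fun d hd e he => ?_⟩
  simp only [coe_filter, mem_univ, true_and, Set.mem_ofPred_eq] at hd he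
  obtain ⟨n, hn⟩ := E.rot_orbit d e (hd.trans he.symm)
  exact ⟨n, by simpa using hn⟩

theorem rot_pow_apply_eq_self_iff (hc : IsCubic G) (d : G.Dart) {n : ℕ} :
    (E.rot ^ n) d = d ↔ 3 ∣ n := by
  rw [(E.isCycleOn_rot d.fst).pow_apply_eq (by simp), hc.card_filter_fst_eq]

theorem exists_rot_pow_eq (hc : IsCubic G) {d e : G.Dart} (h : e.fst = d.fst) :
    ∃ n < 3, (E.rot ^ n) d = e := by
  have := (E.isCycleOn_rot d.fst).exists_pow_eq (a := d) (b := e) (by simp) (by simpa using h)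
  rwa [hc.card_filter_fst_eq] at this

theorem rot_ne_self (hc : IsCubic G) (d : G.Dart) : E.rot d ≠ d := by
  simpa using (E.rot_pow_apply_eq_self_iff hc d (n := 1)).not.2 (by norm_num)

theorem rot_rot_ne_self (hc : IsCubic G) (d : G.Dart) : E.rot (E.rot d) ≠ d := by
  simpa [pow_succ] using (E.rot_pow_apply_eq_self_iff hc d (n := 2)).not.2 (by norm_num)

theorem rot_rot_rot (hc : IsCubic G) (d : G.Dart) : E.rot (E.rot (E.rot d)) = d := by
  simpa [pow_succ] using (E.rot_pow_apply_eq_self_iff hc d (n := 3)).2 dvd_rfl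

theorem facePerm_ne_symm (hc : IsCubic G) (d : G.Dart) : E.facePerm d ≠ d.symm :=
  E.rot_ne_self hc d.symm

theorem facePerm_symm_facePerm_ne (hc : IsCubic G) (d : G.Dart) :
    E.facePerm (E.facePerm d).symm ≠ d.symm := by
  simpa [facePerm_apply] using E.rot_rot_ne_self hc d.symm

theorem faceVert_ne_add_two (hc : IsCubic G) (d : G.Dart) (n : ℕ) :
    E.faceVert d n ≠ E.faceVert d (n + 2) := by
  intro h
  refine E.facePerm_ne_symm hc ((E.facePerm ^ n) d) (Dart.ext _ _ (Prod.ext (E.fst_facePerm _) ?_))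
  rw [← facePerm_pow_succ, snd_facePerm_pow, ← h]
  rfl

noncomputable def face (d : G.Dart) : Finset G.Dart := {e | E.facePerm.SameCycle d e}

noncomputable def faceSize (d : G.Dart) : ℕ := #(E.face d)

def OppositeTriangle (d : G.Dart) : Prop := E.faceSize d.symm = 3

theorem mem_face {d e : G.Dart} : e ∈ E.face d ↔ E.facePerm.SameCycle d e := by
  simp [face]

theorem mem_face_self (d : G.Dart) : d ∈ E.face d := E.mem_face.2 (.refl _ _)

theorem isCycleOn_face (d : G.Dart) : E.facePerm.IsCycleOn (E.face d) := by
  simpa [face] using E.facePerm.isCycleOn_sameCycle d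

theorem face_eq_of_mem {d e : G.Dart} (h : e ∈ E.face d) : E.face e = E.face d := by
  ext x
  simp only [E.mem_face] at h ⊢
  exact ⟨h.trans, h.symm.trans⟩

theorem facePerm_pow_mem_face (d : G.Dart) (n : ℕ) : (E.facePerm ^ n) d ∈ E.face d :=
  E.mem_face.2 ⟨n, by simp⟩

theorem faceSize_pos (d : G.Dart) : 0 < E.faceSize d :=
  card_pos.2 ⟨d, E.mem_face_self d⟩

theorem facePerm_pow_faceSize (d : G.Dart) : (E.facePerm ^ E.faceSize d) d = d :=
  (E.isCycleOn_face d).pow_card_apply (E.mem_face_self d)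

theorem facePerm_facePerm_facePerm {d : G.Dart} (h : E.faceSize d = 3) :
    E.facePerm (E.facePerm (E.facePerm d)) = d := by
  simpa [h, pow_succ] using E.facePerm_pow_faceSize d

theorem snd_facePerm_facePerm {d : G.Dart} (h : E.faceSize d = 3) :
    (E.facePerm (E.facePerm d)).snd = d.fst := by
  rw [← E.fst_facePerm, E.facePerm_facePerm_facePerm h]

theorem faceVert_add_faceSize (d : G.Dart) (n : ℕ) :
    E.faceVert d (n + E.faceSize d) = E.faceVert d n := by
  rw [faceVert, pow_add, Equiv.Perm.mul_apply, facePerm_pow_faceSize, faceVert]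

theorem three_le_faceSize (hc : IsCubic G) (d : G.Dart) : 3 ≤ E.faceSize d := by
  have hper := E.faceVert_add_faceSize d 0
  have h1 : E.faceSize d ≠ 1 := fun h => (E.adj_faceVert d 0).ne (by simpa [h] using hper.symm)
  have h2 : E.faceSize d ≠ 2 := fun h => E.faceVert_ne_add_two hc d 0 (by simpa [h] using hper.symm)
  have := E.faceSize_pos d
  omega

theorem facePerm_pow_injOn (d : G.Dart) {m n : ℕ} (hm : m < E.faceSize d) (hn : n < E.faceSize d)
    (h : (E.facePerm ^ m) d = (E.facePerm ^ n) d) : m = n := by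
  have : m % E.faceSize d = n % E.faceSize d :=
    ((E.isCycleOn_face d).pow_apply_eq_pow_apply (E.mem_face_self d)).1 h
  rwa [Nat.mod_eq_of_lt hm, Nat.mod_eq_of_lt hn] at this

theorem faceSize_eq_of_mem {d e : G.Dart} (h : e ∈ E.face d) : E.faceSize e = E.faceSize d := by
  rw [faceSize, faceSize, E.face_eq_of_mem h]

theorem sum_card_filter_face (p : G.Dart → Prop) [DecidablePred p] :
    ∑ F ∈ univ.image E.face, #(F.filter p) = #(univ.filter p) := by
  rw [card_eq_sum_card_fiberwise (f := E.face) (t := univ.image E.face) (by simp [Set.MapsTo])]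
  refine sum_congr rfl fun F hF => ?_
  obtain ⟨d, -, rfl⟩ := mem_image.1 hF
  congr 1
  ext e
  simp only [mem_filter, mem_univ, true_and]
  exact ⟨fun ⟨he, hp⟩ => ⟨hp, E.face_eq_of_mem he⟩, fun ⟨hp, he⟩ => ⟨he ▸ E.mem_face_self e, hp⟩⟩

theorem ncard_faces : E.faces.ncard = #(univ.image E.face) := by
  have : E.faces = (↑) '' (↑(univ.image E.face) : Set (Finset G.Dart)) := by
    ext s
    simp [faces, faceOf, face, Equiv.Perm.SameCycle, eq_comm]
  rw [this, Set.ncard_image_of_injective _ coe_injective, Set.ncard_coe_finset]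

theorem six_mul_ncard_faces (hc : IsCubic G) (hE : E.IsSpherical) :
    6 * E.faces.ncard = Fintype.card G.Dart + 12 := by
  have h3 : Fintype.card G.Dart = 3 * Fintype.card V := by
    simp [dart_card_eq_sum_degrees, hc.degree_eq, mul_comm]
  have h2 := G.dart_card_eq_twice_card_edges
  have := hE
  rw [IsSpherical, Set.ncard_univ, Nat.card_eq_fintype_card, ← coe_edgeFinset,
    Set.ncard_coe_finset] at this
  omega

theorem exists_faceSize_le_five_add_card (hc : IsCubic G) (hE : E.IsSpherical)
    (hT : ∀ d, E.faceSize d = 3 → ¬ E.OppositeTriangle d) :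
    ∃ d, E.faceSize d ≠ 3 ∧ E.faceSize d ≤ 5 + #((E.face d).filter E.OppositeTriangle) := by
  have hsymm : #(univ.filter E.OppositeTriangle) = #(univ.filter (E.faceSize · = 3)) :=
    card_nbij' Dart.symm Dart.symm (fun d hd => by simpa [OppositeTriangle] using hd)
      (fun d hd => by simpa [OppositeTriangle] using hd) (fun d _ => d.symm_symm)
      (fun d _ => d.symm_symm)
  have hlt : ∑ F ∈ univ.image E.face, (#F + #(F.filter (E.faceSize · = 3))) <
      ∑ F ∈ univ.image E.face, (6 + #(F.filter E.OppositeTriangle)) := by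
    have := E.six_mul_ncard_faces hc hE
    have hcard : ∑ F ∈ univ.image E.face, #F = Fintype.card G.Dart := by
      simpa using E.sum_card_filter_face (fun _ => True)
    rw [sum_add_distrib, sum_add_distrib, hcard, E.sum_card_filter_face, E.sum_card_filter_face,
      hsymm, sum_const, smul_eq_mul, ← E.ncard_faces]
    omega
  obtain ⟨F, hF, hlt⟩ := exists_lt_of_sum_lt hlt
  obtain ⟨d, -, rfl⟩ := mem_image.1 hF
  refine ⟨d, fun h3 => ?_, ?_⟩
  · have hall : (E.face d).filter (E.faceSize · = 3) = E.face d :=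
      filter_true_of_mem fun e he => (E.faceSize_eq_of_mem he).trans h3
    rw [hall] at hlt
    have : E.faceSize d + E.faceSize d < 6 + #((E.face d).filter E.OppositeTriangle) := hlt
    obtain ⟨e, he⟩ := card_pos.1 (by omega : 0 < #((E.face d).filter E.OppositeTriangle))
    rw [mem_filter] at he
    exact hT e ((E.faceSize_eq_of_mem he.1).trans h3) he.2
  · change E.faceSize d + _ < _ at hlt
    omega

theorem symm_eq_facePerm_pow_four (hc : IsCubic G) {d : G.Dart} (hs : 4 ≤ E.faceSize d)
    (htri : E.faceVert d 4 = E.faceVert d 1) : d.symm = (E.facePerm ^ 4) d := by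
  set D : ℕ → G.Dart := fun n => (E.facePerm ^ n) d
  have hsucc : ∀ n, E.facePerm (D n) = D (n + 1) := fun n => (E.facePerm_pow_succ d n).symm
  show (D 0).symm = D 4
  have hfst : (D 0).symm.fst = (D 3).symm.fst := by
    simp only [Dart.symm_toProd, Prod.fst_swap, D, E.snd_facePerm_pow]
    exact htri.symm
  -- `(D 0).symm` and `(D 3).symm` both leave `faceVert d 1`, and the rotation takes the latter
  -- to `D 4`; the other two rotation distances would close the face after 3 steps or backtrack.
  obtain ⟨n, hn, hrot⟩ := E.exists_rot_pow_eq hc hfst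
  interval_cases n
  · have : D 3 = D 0 := by simpa using congrArg Dart.symm hrot
    have := E.facePerm_pow_injOn d (by omega) (by omega) this
    omega
  · rw [← hrot, pow_one, ← facePerm_apply, hsucc]
  · have h1 : D 1 = (D 3).symm := by
      rw [← hsucc, facePerm_apply, ← hrot]
      simpa [pow_succ] using E.rot_rot_rot hc (D 3).symm
    refine ((E.adj_faceVert d 2).ne ?_).elim
    exact (E.snd_facePerm_pow d 1).symm.trans (congrArg (·.snd) h1)

section NoFourCycle

variable (hc : IsCubic G) (h4 : 4 ∉ CycleLengths G)
include hc h4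

theorem not_oppositeTriangle_of_adj {a : G.Dart} (hadj : G.Adj (E.facePerm a).snd a.fst) :
    ¬ E.OppositeTriangle a ∧ ¬ E.OppositeTriangle (E.facePerm a) := by
  have ha := a.adj
  have hb := (E.facePerm a).adj
  rw [E.fst_facePerm] at hb
  refine ⟨fun h => E.facePerm_symm_facePerm_ne hc a ?_,
    fun h => E.facePerm_symm_facePerm_ne hc a ?_⟩
  · have h1 := (E.facePerm a.symm).adj
    have h2 := (E.facePerm (E.facePerm a.symm)).adj
    rw [E.fst_facePerm] at h1 h2
    rw [E.snd_facePerm_facePerm h] at h2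
    have hw := eq_of_adj_of_adj_of_four_notMem h4 ha hadj hb.symm h1.symm h2
    have : E.facePerm (E.facePerm a.symm) = (E.facePerm a).symm :=
      Dart.ext _ _ (Prod.ext (by rw [E.fst_facePerm, ← hw]; rfl)
        (by rw [E.snd_facePerm_facePerm h]; exact (E.fst_facePerm a).symm))
    rw [← this, E.facePerm_facePerm_facePerm h]
  · have h1 := (E.facePerm (E.facePerm a).symm).adj
    have h2 := (E.facePerm (E.facePerm (E.facePerm a).symm)).adj
    rw [E.fst_facePerm] at h1 h2
    rw [E.snd_facePerm_facePerm h] at h2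
    simp only [Dart.symm_toProd, Prod.fst_swap, Prod.snd_swap, E.fst_facePerm] at h1 h2
    have hw := eq_of_adj_of_adj_of_four_notMem h4 hb ha hadj.symm h1.symm h2
    exact Dart.ext _ _ (Prod.ext (by simp [E.fst_facePerm]) (by simp [hw]))

theorem not_oppositeTriangle_facePerm {d : G.Dart} (h : E.OppositeTriangle d) :
    ¬ E.OppositeTriangle (E.facePerm d) := by
  intro h'
  set c := (E.facePerm d.symm).snd
  set e := (E.facePerm d).snd
  set p := E.facePerm (E.facePerm d.symm)
  have hq : E.facePerm (E.facePerm d).symm = p.symm := by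
    have hp : E.rot p.symm = d.symm := E.facePerm_facePerm_facePerm h
    rw [facePerm_apply, Dart.symm_symm, facePerm_apply, ← hp, E.rot_rot_rot hc]
  have hac : G.Adj d.fst c := by simpa [E.fst_facePerm] using (E.facePerm d.symm).adj
  have hbc : G.Adj d.snd c := by
    simpa [p, E.snd_facePerm_facePerm h, E.fst_facePerm] using p.adj.symm
  have hbe : G.Adj d.snd e := by simpa [E.fst_facePerm] using (E.facePerm d).adj
  have hce : G.Adj c e := by
    have := (E.facePerm (E.facePerm (E.facePerm d).symm)).adj
    rw [E.snd_facePerm_facePerm h', E.fst_facePerm, hq] at this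
    simpa [p, E.fst_facePerm] using this
  have hae : d.fst = e := eq_of_adj_of_adj_of_four_notMem h4 hbc d.adj hac hbe.symm hce.symm
  exact E.facePerm_ne_symm hc d (Dart.ext _ _ (Prod.ext (E.fst_facePerm d) hae.symm))

theorem not_oppositeTriangle_of_faceSize_eq_three {d : G.Dart} (h : E.faceSize d = 3) :
    ¬ E.OppositeTriangle d :=
  (E.not_oppositeTriangle_of_adj hc h4 (by
    simpa [E.snd_facePerm_facePerm h, E.fst_facePerm] using (E.facePerm (E.facePerm d)).adj)).1

theorem two_mul_card_oppositeTriangle_add_card_le (d : G.Dart) {N : Finset G.Dart}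
    (hN : N ⊆ E.face d)
    (hNp : ∀ x ∈ N, ¬ E.OppositeTriangle x ∧ ¬ E.OppositeTriangle (E.facePerm x)) :
    2 * #((E.face d).filter E.OppositeTriangle) + #N ≤ E.faceSize d :=
  E.facePerm.two_mul_card_filter_add_card_le
    (fun _ hx => E.mem_face.2 (Equiv.Perm.sameCycle_apply_right.2 (E.mem_face.1 hx)))
    (fun _ => E.not_oppositeTriangle_facePerm hc h4) hN hNp

theorem not_oppositeTriangle_facePerm_pow {d : G.Dart} (hs3 : E.faceSize d ≠ 3)
    (htri : E.faceVert d 4 = E.faceVert d 1) {n : ℕ} (hn : n < 5) :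
    ¬ E.OppositeTriangle ((E.facePerm ^ n) d) := by
  have hsymm := E.symm_eq_facePerm_pow_four hc (by have := E.three_le_faceSize hc d; omega) htri
  have hsize := fun n => E.faceSize_eq_of_mem (E.facePerm_pow_mem_face d n)
  have hadj := E.adj_faceVert d
  have h1 : G.Adj (E.facePerm ((E.facePerm ^ 1) d)).snd ((E.facePerm ^ 1) d).fst := by
    rw [← facePerm_pow_succ, snd_facePerm_pow, ← faceVert, ← htri]
    exact hadj 3
  have h2 : G.Adj (E.facePerm ((E.facePerm ^ 2) d)).snd ((E.facePerm ^ 2) d).fst := by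
    rw [← facePerm_pow_succ, snd_facePerm_pow, ← faceVert, show 2 + 1 + 1 = 4 from rfl, htri]
    exact hadj 1
  interval_cases n
  · rw [pow_zero, Equiv.Perm.one_apply, OppositeTriangle, hsymm, hsize]
    exact hs3
  · exact (E.not_oppositeTriangle_of_adj hc h4 h1).1
  · exact E.facePerm_pow_succ d 1 ▸ (E.not_oppositeTriangle_of_adj hc h4 h1).2
  · exact E.facePerm_pow_succ d 2 ▸ (E.not_oppositeTriangle_of_adj hc h4 h2).2
  · rw [OppositeTriangle, ← hsymm, Dart.symm_symm]
    exact hs3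

theorem faceSize_gt_of_faceVert_four_eq_one {d : G.Dart} (hs3 : E.faceSize d ≠ 3)
    (htri : E.faceVert d 4 = E.faceVert d 1) :
    5 + #((E.face d).filter E.OppositeTriangle) < E.faceSize d := by
  have hs4 : 4 ≤ E.faceSize d := by have := E.three_le_faceSize hc d; omega
  have hcount := E.two_mul_card_oppositeTriangle_add_card_le hc h4 d
    (N := (range 4).image fun n => (E.facePerm ^ n) d)
    (by simp [image_subset_iff, E.facePerm_pow_mem_face]) (by
      simp only [mem_image, mem_range]
      rintro _ ⟨n, hn, rfl⟩
      exact ⟨E.not_oppositeTriangle_facePerm_pow hc h4 hs3 htri (by omega),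
        E.facePerm_pow_succ d n ▸ E.not_oppositeTriangle_facePerm_pow hc h4 hs3 htri (by omega)⟩)
  rw [card_image_of_injOn (fun m hm n hn h => E.facePerm_pow_injOn d
    (by simp at hm; omega) (by simp at hn; omega) h), card_range] at hcount
  have h50 : E.faceVert d 5 = E.faceVert d 0 := (E.snd_facePerm_pow d 4).symm.trans
    (congrArg (·.snd) (E.symm_eq_facePerm_pow_four hc hs4 htri).symm)
  have hadj := E.adj_faceVert d
  have hper := E.faceVert_add_faceSize d
  by_contra hle
  rcases (by omega : E.faceSize d = 4 ∨ E.faceSize d = 5 ∨ E.faceSize d = 6) with h | h | h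
  · exact (hadj 0).ne (by simpa [h, htri] using (hper 0).symm)
  · exact E.faceVert_ne_add_two hc d 4 (by simpa [h, htri] using (hper 1).symm)
  · exact (hadj 5).ne (by simpa [h, h50] using (hper 0).symm)

end NoFourCycle

theorem exists_mem_cycleLengths_of_isSpherical (hc : IsCubic G) (hE : E.IsSpherical) :
    ∃ ℓ ∈ CycleLengths G, 4 ≤ ℓ ∧ ℓ ≤ 10 := by
  by_contra! hbad
  have h4 : 4 ∉ CycleLengths G := fun h => by have := hbad 4 h le_rfl; omega
  obtain ⟨d, hs3, hj⟩ := E.exists_faceSize_le_five_add_card hc hE fun _ =>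
    E.not_oppositeTriangle_of_faceSize_eq_three hc h4
  have h2j := E.two_mul_card_oppositeTriangle_add_card_le hc h4 d (empty_subset _) (by simp)
  have hper := E.faceVert_add_faceSize d
  have hs := E.faceSize_pos d
  obtain ⟨k, hk, hks, i, hi⟩ := exists_cycle_of_closed_seq (E.adj_faceVert d)
    (E.faceVert_ne_add_two hc d) hs (by simpa using hper 0)
  obtain rfl : k = 3 := by
    have := three_le_of_mem_cycleLengths hk
    have := hbad k hk
    omega
  set d' := (E.facePerm ^ (i + E.faceSize d - 1)) d
  have hd' : d' ∈ E.face d := E.facePerm_pow_mem_face d _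
  have := E.faceSize_gt_of_faceVert_four_eq_one hc h4 (d := d')
    (by rwa [E.faceSize_eq_of_mem hd']) (by
      rw [E.faceVert_facePerm_pow, E.faceVert_facePerm_pow,
        show 4 + (i + E.faceSize d - 1) = i + 3 + E.faceSize d by omega,
        show 1 + (i + E.faceSize d - 1) = i + E.faceSize d by omega, hper, hper, hi])
  rw [E.face_eq_of_mem hd', E.faceSize_eq_of_mem hd'] at this
  omega

end PlaneEmbedding

theorem statement3_general (V : Type) [Fintype V] (G : SimpleGraph V)
    (hc : IsCubic G) (hp : IsPlanar G) :
    ∃ ℓ ∈ CycleLengths G, 4 ≤ ℓ ∧ ℓ ≤ 10 := by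
  obtain ⟨-, E, hE⟩ := hp
  exact E.exists_mem_cycleLengths_of_isSpherical hc hE

/-- Merker's conjecture holds for `k = 4`: every 3-connected cubic planar graph
of circumference at least 4 has a cycle of length `ℓ` with `4 ≤ ℓ ≤ 10`. -/
theorem statement3 (V : Type) [Fintype V] (G : SimpleGraph V)
    (h3 : IsThreeConnected G) (hc : IsCubic G) (hp : IsPlanar G)
    (hcirc : CircumferenceAtLeast G 4) :
    ∃ ℓ ∈ CycleLengths G, 4 ≤ ℓ ∧ ℓ ≤ 10 :=
  statement3_general V G hc hp
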